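/- (Forward regret of FTRL, finite-dimensional convex case) Let X ⊂ ℝ^d be closed and convex, let q_0, ..., q_T and p_1, ..., p_T be proper closed convex functions on ℝ^d with each p_t attaining its infimum over X at x_t (p_t(x_t) = inf_{x∈X} p_t(x) < +∞), set r_t = p_t + q_{t−1}, and let x_{t+1} ∈ argmin_{x∈X} ⟨g_{1:t}, x⟩ + p_{1:t}(x) + q_{0:t}(x) for t = 0,...,T (argmin assumed nonempty with finite value). Then for any x* ∈ X: ∑_{t=1}^T ⟨g_t, x_{t+1} − x*⟩ ≤ ∑_{t=0}^T (q_t(x*) − q_t(x_{t+1})) + ∑_{t=1}^T (p_t(x*) − p_t(x_t)) − ∑_{t=1}^T B_{r_{1:t}}(x_{t+1}, x_t). -/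

import Mathlib

/-!
Write `Φ_t = ⟨g_{1:t}, ·⟩ + p_{1:t} + q_{0:t}`, so that `x_{t+1}` minimises `Φ_t` over `X`, and
`Φ_t = Φ_{t-1} + ⟨g_t, ·⟩ + p_t + q_t`. Since `x_t` minimises both `Φ_{t-1}` and `p_t` over the
convex set `X`, and `Φ_{t-1} + p_t = ⟨g_{1:t-1}, ·⟩ + r_{1:t}`, the directional derivative of
`r_{1:t}` at `x_t` towards `x_{t+1}` is at least `-⟨g_{1:t-1}, x_{t+1} - x_t⟩` (by convexity only
steps in `(0, 1]` matter, and these stay in `X`). Hence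
`B_{r_{1:t}}(x_{t+1}, x_t) ≤ (Φ_{t-1} + p_t)(x_{t+1}) - (Φ_{t-1} + p_t)(x_t)`, which bounds
round `t` by `Φ_t(x_{t+1}) - Φ_{t-1}(x_t)`. These telescope, and `Φ_T(x_{T+1}) ≤ Φ_T(x*)` concludes.
All values at the iterates are finite, so the bookkeeping takes place in `ℝ`.
-/

noncomputable section

/-- Directional derivative of a convex extended-real function, given by the
infimum of difference quotients (which equals `lim_{α↓0}` for convex functions). -/
def dirDeriv {n : ℕ} (h : EuclideanSpace ℝ (Fin n) → EReal)
    (x z : EuclideanSpace ℝ (Fin n)) : EReal :=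
  ⨅ α : Set.Ioi (0:ℝ), (h (x + (α : ℝ) • z) - h x) * (((α : ℝ))⁻¹ : ℝ)

def breg {n : ℕ} (h : EuclideanSpace ℝ (Fin n) → EReal)
    (y x : EuclideanSpace ℝ (Fin n)) : EReal :=
  if h y ≠ ⊤ ∧ h y ≠ ⊥ then h y - h x - dirDeriv h x (y - x) else ⊤

def ConvexE {n : ℕ} (f : EuclideanSpace ℝ (Fin n) → EReal) : Prop :=
  ∀ a b, f a ≠ ⊤ → f b ≠ ⊤ → ∀ α : ℝ, α ∈ Set.Icc (0:ℝ) 1 →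
    f (α • a + (1 - α) • b) ≤ ((α * (f a).toReal + (1 - α) * (f b).toReal : ℝ) : EReal)

open Finset

open scoped InnerProductSpace

namespace EReal

theorem coe_finset_sum {ι : Type*} (s : Finset ι) (f : ι → ℝ) :
    ((∑ i ∈ s, f i : ℝ) : EReal) = ∑ i ∈ s, (f i : EReal) :=
  map_sum (⟨⟨(↑), coe_zero⟩, coe_add⟩ : ℝ →+ EReal) f s

theorem sum_ne_bot {ι : Type*} {s : Finset ι} {f : ι → EReal} (h : ∀ i ∈ s, f i ≠ ⊥) :
    ∑ i ∈ s, f i ≠ ⊥ :=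
  Finset.sum_induction f (· ≠ ⊥) (fun _ _ ha hb => add_ne_bot_iff.2 ⟨ha, hb⟩) zero_ne_bot h

theorem sum_ne_top_iff {ι : Type*} {s : Finset ι} {f : ι → EReal} (h : ∀ i ∈ s, f i ≠ ⊥) :
    ∑ i ∈ s, f i ≠ ⊤ ↔ ∀ i ∈ s, f i ≠ ⊤ := by
  induction s using Finset.cons_induction with
  | empty => simp
  | cons a s ha ih =>
    simp only [sum_cons, mem_cons, forall_eq_or_imp] at h ⊢
    rw [add_ne_top_iff_ne_top₂ h.1 (sum_ne_bot h.2), ih h.2]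

theorem sum_sub_coe {ι : Type*} (s : Finset ι) (f : ι → EReal) (c : ι → ℝ) :
    ∑ i ∈ s, (f i - c i) = ∑ i ∈ s, f i - ((∑ i ∈ s, c i : ℝ) : EReal) := by
  simp only [sub_eq_add_neg, sum_add_distrib, ← coe_neg, ← coe_finset_sum, sum_neg_distrib]

theorem coe_sub_le_of_le_coe_add {r s : ℝ} {e : EReal} (h : (r : EReal) ≤ s + e) :
    ((r - s : ℝ) : EReal) ≤ e := by
  rw [coe_sub, sub_le_iff_le_add (.inl (coe_ne_bot s)) (.inl (coe_ne_top s)), add_comm]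
  exact h

theorem eq_coe_sub_of_coe_add_eq {r s : ℝ} {e : EReal} (h : (s : EReal) + e = r) :
    e = ((r - s : ℝ) : EReal) := by
  induction e using EReal.rec with
  | bot => simp at h
  | coe e => rw [← coe_add, EReal.coe_eq_coe_iff] at h; rw [← h, _root_.add_sub_cancel_left]
  | top => simp at h

theorem coe_le_sub_mul_inv {a k α : ℝ} {e : EReal} (hα : 0 < α)
    (h : ((a + α * k : ℝ) : EReal) ≤ e) : (k : EReal) ≤ (e - a) * ((α⁻¹ : ℝ) : EReal) := by
  induction e using EReal.rec with
  | bot => exact absurd (le_bot_iff.1 h) (coe_ne_bot _)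
  | coe e =>
    rw [EReal.coe_le_coe_iff] at h
    rw [← coe_sub, ← coe_mul, EReal.coe_le_coe_iff, le_mul_inv_iff₀ hα]
    linarith
  | top => rw [top_sub_coe, top_mul_coe_of_pos (inv_pos.2 hα)]; exact le_top

theorem coe_le_sub_add_sub_sub {L K R B c φ : ℝ} {P Q : EReal}
    (hφ : (φ : EReal) ≤ c + P + Q) (h : L + K + R + B + c ≤ φ) :
    (L : EReal) ≤ Q - K + (P - R) - B := by
  have hPQ : ((L + K + R + B : ℝ) : EReal) ≤ Q + P := by
    have := coe_sub_le_of_le_coe_add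
      ((EReal.coe_le_coe_iff.2 h).trans (hφ.trans_eq (add_assoc _ _ _)))
    rwa [_root_.add_sub_cancel_right, add_comm P] at this
  calc (L : EReal) = ((L + K + R + B : ℝ) : EReal) + ((-(K + R + B) : ℝ) : EReal) := by
        rw [← coe_add]; ring_nf
    _ ≤ Q + P + ((-(K + R + B) : ℝ) : EReal) := by gcongr
    _ = Q - K + (P - R) - B := by
        rw [show -(K + R + B) = -K + -R + -B by ring]
        simp only [sub_eq_add_neg, coe_add, coe_neg]
        ac_rfl

end EReal

theorem sum_Icc_le_sub_of_forall_le_sub {a φ : ℕ → ℝ} {T : ℕ}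
    (h : ∀ s < T, a (s + 1) ≤ φ (s + 1) - φ s) : ∑ t ∈ Icc 1 T, a t ≤ φ T - φ 0 := by
  induction T with
  | zero => simp
  | succ T ih =>
    rw [sum_Icc_succ_top (Nat.le_add_left 1 T)]
    linarith [ih fun s hs => h s (Nat.lt_succ_of_lt hs), h T T.lt_succ_self]

section ConvexE

variable {n : ℕ} {f g : EuclideanSpace ℝ (Fin n) → EReal}

theorem ConvexE.add (hf : ConvexE f) (hg : ConvexE g) (hf_bot : ∀ u, f u ≠ ⊥)
    (hg_bot : ∀ u, g u ≠ ⊥) : ConvexE (fun u => f u + g u) := by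
  intro a b ha hb α hα
  rw [EReal.add_ne_top_iff_ne_top₂ (hf_bot a) (hg_bot a)] at ha
  rw [EReal.add_ne_top_iff_ne_top₂ (hf_bot b) (hg_bot b)] at hb
  rw [EReal.toReal_add ha.1 (hf_bot a) ha.2 (hg_bot a),
    EReal.toReal_add hb.1 (hf_bot b) hb.2 (hg_bot b)]
  calc f (α • a + (1 - α) • b) + g (α • a + (1 - α) • b)
      ≤ ((α * (f a).toReal + (1 - α) * (f b).toReal : ℝ) : EReal)
        + ((α * (g a).toReal + (1 - α) * (g b).toReal : ℝ) : EReal) :=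
        add_le_add (hf a b ha.1 hb.1 α hα) (hg a b ha.2 hb.2 α hα)
    _ = _ := by rw [← EReal.coe_add]; ring_nf

theorem ConvexE.sum {ι : Type*} (s : Finset ι) {f : ι → EuclideanSpace ℝ (Fin n) → EReal}
    (hf : ∀ i ∈ s, ConvexE (f i)) (hf_bot : ∀ i ∈ s, ∀ u, f i u ≠ ⊥) :
    ConvexE (fun u => ∑ i ∈ s, f i u) := by
  have key := Finset.sum_induction f (fun h => ConvexE h ∧ ∀ u, h u ≠ ⊥)
    (fun _ _ h₁ h₂ => ⟨h₁.1.add h₂.1 h₁.2 h₂.2, fun u => EReal.add_ne_bot_iff.2 ⟨h₁.2 u, h₂.2 u⟩⟩)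
    ⟨fun _ _ _ _ _ _ => by simp, fun _ => EReal.zero_ne_bot⟩ fun i hi => ⟨hf i hi, hf_bot i hi⟩
  convert key.1 using 1
  exact funext fun u => (Finset.sum_apply u s f).symm

end ConvexE

section Bregman

variable {n : ℕ} {F : EuclideanSpace ℝ (Fin n) → EReal} {X : Set (EuclideanSpace ℝ (Fin n))}
  {c x y z : EuclideanSpace ℝ (Fin n)}

theorem dirDeriv_le_sub (F : EuclideanSpace ℝ (Fin n) → EReal) (x z : EuclideanSpace ℝ (Fin n)) :
    dirDeriv F x z ≤ F (x + z) - F x := by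
  simpa [dirDeriv] using iInf_le
    (fun α : Set.Ioi (0:ℝ) => (F (x + (α : ℝ) • z) - F x) * (((α : ℝ))⁻¹ : ℝ))
    ⟨1, Set.mem_Ioi.2 one_pos⟩

theorem ConvexE.le_dirDeriv (hF : ConvexE F) (hF_bot : ∀ u, F u ≠ ⊥) {a k : ℝ}
    (hFx : F x = a) (H : ∀ α : ℝ, 0 < α → α ≤ 1 → ((a + α * k : ℝ) : EReal) ≤ F (x + α • z)) :
    (k : EReal) ≤ dirDeriv F x z := by
  refine le_iInf fun ⟨α, hα⟩ => ?_
  rw [hFx]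
  refine EReal.coe_le_sub_mul_inv hα ?_
  rcases le_or_gt α 1 with hα1 | hα1
  · exact H α hα hα1
  -- the difference quotients of a convex function increase with the step
  rcases eq_or_ne (F (x + α • z)) ⊤ with htop | htop
  · rw [htop]; exact le_top
  obtain ⟨b, hb⟩ : ∃ b : ℝ, F (x + α • z) = b :=
    ⟨_, (EReal.coe_toReal htop (hF_bot _)).symm⟩
  have hchord := hF (x + α • z) x htop (by simp [hFx]) α⁻¹
    ⟨inv_nonneg.2 hα.le, inv_le_one_of_one_le₀ hα1.le⟩
  have hpt : α⁻¹ • (x + α • z) + (1 - α⁻¹) • x = x + z := by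
    rw [smul_add, smul_smul, inv_mul_cancel₀ hα.ne', one_smul]; module
  have h1 := H 1 one_pos le_rfl
  rw [hpt, hb, hFx, EReal.toReal_coe, EReal.toReal_coe] at hchord
  rw [one_smul, one_mul] at h1
  have := EReal.coe_le_coe_iff.1 (h1.trans hchord)
  have hαk : α * k ≤ b - a := (le_inv_mul_iff₀ hα).1 (by linarith)
  rw [hb, EReal.coe_le_coe_iff]
  linarith

theorem le_dirDeriv_of_isMinOn (hF : ConvexE F) (hF_bot : ∀ u, F u ≠ ⊥) (hX : Convex ℝ X)
    (hx : x ∈ X) (hy : y ∈ X) {a : ℝ} (hFx : F x = a)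
    (hmin : IsMinOn (fun u => (⟪c, u⟫_ℝ : EReal) + F u) X x) :
    ((-⟪c, y - x⟫_ℝ : ℝ) : EReal) ≤ dirDeriv F x (y - x) := by
  refine hF.le_dirDeriv hF_bot hFx fun α hα hα1 => ?_
  have hw : x + α • (y - x) ∈ X := by
    convert hX hx hy (sub_nonneg.2 hα1) hα.le (by ring) using 1
    module
  have hxw := isMinOn_iff.1 hmin _ hw
  rw [hFx, ← EReal.coe_add] at hxw
  convert EReal.coe_sub_le_of_le_coe_add hxw using 2
  rw [inner_add_right, real_inner_smul_right]
  ring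

theorem exists_breg_eq_le_of_isMinOn {G : EuclideanSpace ℝ (Fin n) → EReal} (hF : ConvexE F)
    (hF_bot : ∀ u, F u ≠ ⊥) (hG : ∀ u, G u = ⟪c, u⟫_ℝ + F u) (hX : Convex ℝ X) (hx : x ∈ X)
    (hy : y ∈ X) (hmin : IsMinOn G X x) {a b : ℝ} (hGx : G x = a) (hGy : G y = b) :
    ∃ d : ℝ, breg F y x = d ∧ d ≤ b - a := by
  have hFx := EReal.eq_coe_sub_of_coe_add_eq ((hG x).symm.trans hGx)
  have hFy := EReal.eq_coe_sub_of_coe_add_eq ((hG y).symm.trans hGy)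
  rw [show G = fun u => (⟪c, u⟫_ℝ : EReal) + F u from funext hG] at hmin
  have hlower := le_dirDeriv_of_isMinOn hF hF_bot hX hx hy hFx hmin
  have hupper : dirDeriv F x (y - x) ≤ ((b - ⟪c, y⟫_ℝ - (a - ⟪c, x⟫_ℝ) : ℝ) : EReal) := by
    simpa [hFx, hFy] using dirDeriv_le_sub F x (y - x)
  obtain ⟨δ, hδ⟩ : ∃ δ : ℝ, dirDeriv F x (y - x) = δ :=
    ⟨_, (EReal.coe_toReal (ne_top_of_le_ne_top (EReal.coe_ne_top _) hupper)
      (ne_bot_of_le_ne_bot (EReal.coe_ne_bot _) hlower)).symm⟩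
  rw [hδ, EReal.coe_le_coe_iff, inner_sub_right] at hlower
  refine ⟨b - ⟪c, y⟫_ℝ - (a - ⟪c, x⟫_ℝ) - δ, ?_, by linarith⟩
  rw [breg, if_pos ⟨hFy ▸ EReal.coe_ne_top _, hFy ▸ EReal.coe_ne_bot _⟩, hFx, hFy, hδ]
  norm_cast

end Bregman

section FTRL

variable {n : ℕ} (g : ℕ → EuclideanSpace ℝ (Fin n)) (p q : ℕ → EuclideanSpace ℝ (Fin n) → EReal)

def ftrlObjective (t : ℕ) (u : EuclideanSpace ℝ (Fin n)) : EReal :=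
  ((⟪∑ s ∈ Icc 1 t, g s, u⟫_ℝ : ℝ) : EReal) + ∑ s ∈ Icc 1 t, p s u + ∑ s ∈ Icc 0 t, q s u

/-- The paper's `r_{1:t}`, meaningful for `1 ≤ t` only: at `t = 0` the truncated `t - 1`
brings in `q_0`. -/
def ftrlRegularizer (t : ℕ) (u : EuclideanSpace ℝ (Fin n)) : EReal :=
  ∑ s ∈ Icc 1 t, p s u + ∑ s ∈ Icc 0 (t - 1), q s u

variable {g p q}

theorem ftrlObjective_zero (u : EuclideanSpace ℝ (Fin n)) : ftrlObjective g p q 0 u = q 0 u := by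
  simp [ftrlObjective]

theorem ftrlObjective_succ (t : ℕ) (u : EuclideanSpace ℝ (Fin n)) :
    ftrlObjective g p q (t + 1) u
      = ftrlObjective g p q t u + ⟪g (t + 1), u⟫_ℝ + p (t + 1) u + q (t + 1) u := by
  simp only [ftrlObjective, sum_Icc_succ_top (Nat.le_add_left 1 t),
    sum_Icc_succ_top (Nat.zero_le (t + 1)), inner_add_left, EReal.coe_add]
  abel

theorem ftrlObjective_add_eq (t : ℕ) (u : EuclideanSpace ℝ (Fin n)) :
    ftrlObjective g p q t u + p (t + 1) u
      = ⟪∑ s ∈ Icc 1 t, g s, u⟫_ℝ + ftrlRegularizer p q (t + 1) u := by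
  simp only [ftrlObjective, ftrlRegularizer, add_tsub_cancel_right,
    sum_Icc_succ_top (Nat.le_add_left 1 t)]
  abel

variable {t : ℕ}

theorem ftrlObjective_ne_bot (hp_bot : ∀ s ∈ Icc 1 t, ∀ u, p s u ≠ ⊥)
    (hq_bot : ∀ s ∈ Icc 0 t, ∀ u, q s u ≠ ⊥) (u : EuclideanSpace ℝ (Fin n)) :
    ftrlObjective g p q t u ≠ ⊥ :=
  EReal.add_ne_bot_iff.2 ⟨EReal.add_ne_bot_iff.2 ⟨EReal.coe_ne_bot _,
    EReal.sum_ne_bot fun s hs => hp_bot s hs u⟩, EReal.sum_ne_bot fun s hs => hq_bot s hs u⟩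

theorem ne_top_of_ftrlObjective_ne_top (hp_bot : ∀ s ∈ Icc 1 t, ∀ u, p s u ≠ ⊥)
    (hq_bot : ∀ s ∈ Icc 0 t, ∀ u, q s u ≠ ⊥) {u : EuclideanSpace ℝ (Fin n)}
    (h : ftrlObjective g p q t u ≠ ⊤) : q t u ≠ ⊤ := by
  have hq_sum := ((EReal.add_ne_top_iff_ne_top₂
    (EReal.add_ne_bot_iff.2 ⟨EReal.coe_ne_bot _, EReal.sum_ne_bot fun s hs => hp_bot s hs u⟩)
    (EReal.sum_ne_bot fun s hs => hq_bot s hs u)).1 h).2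
  exact (EReal.sum_ne_top_iff fun s hs => hq_bot s hs u).1 hq_sum t (right_mem_Icc.2 t.zero_le)

theorem ftrlRegularizer_ne_bot (hp_bot : ∀ s ∈ Icc 1 t, ∀ u, p s u ≠ ⊥)
    (hq_bot : ∀ s ∈ Icc 0 (t - 1), ∀ u, q s u ≠ ⊥) (u : EuclideanSpace ℝ (Fin n)) :
    ftrlRegularizer p q t u ≠ ⊥ :=
  EReal.add_ne_bot_iff.2 ⟨EReal.sum_ne_bot fun s hs => hp_bot s hs u,
    EReal.sum_ne_bot fun s hs => hq_bot s hs u⟩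

theorem convexE_ftrlRegularizer (hp : ∀ s ∈ Icc 1 t, ConvexE (p s))
    (hq : ∀ s ∈ Icc 0 (t - 1), ConvexE (q s)) (hp_bot : ∀ s ∈ Icc 1 t, ∀ u, p s u ≠ ⊥)
    (hq_bot : ∀ s ∈ Icc 0 (t - 1), ∀ u, q s u ≠ ⊥) : ConvexE (ftrlRegularizer p q t) :=
  (ConvexE.sum _ hp hp_bot).add (ConvexE.sum _ hq hq_bot)
    (fun u => EReal.sum_ne_bot fun s hs => hp_bot s hs u)
    (fun u => EReal.sum_ne_bot fun s hs => hq_bot s hs u)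

theorem exists_breg_eq_and_round_le (s : ℕ) {X : Set (EuclideanSpace ℝ (Fin n))}
    (hX : Convex ℝ X) {x y : EuclideanSpace ℝ (Fin n)} (hx : x ∈ X) (hy : y ∈ X)
    (hp_bot : ∀ t ∈ Icc 1 (s + 1), ∀ u, p t u ≠ ⊥) (hq_bot : ∀ t ∈ Icc 0 (s + 1), ∀ u, q t u ≠ ⊥)
    (hp_convex : ∀ t ∈ Icc 1 (s + 1), ConvexE (p t)) (hq_convex : ∀ t ∈ Icc 0 s, ConvexE (q t))
    (hΦ_min : IsMinOn (ftrlObjective g p q s) X x) (hΦx : ftrlObjective g p q s x ≠ ⊤)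
    (hp_min : IsMinOn (p (s + 1)) X x) (hpx : p (s + 1) x ≠ ⊤)
    (hΦy : ftrlObjective g p q (s + 1) y ≠ ⊤) :
    ∃ b : ℝ, breg (ftrlRegularizer p q (s + 1)) y x = b ∧
      ⟪g (s + 1), y⟫_ℝ + (q (s + 1) y).toReal + (p (s + 1) x).toReal + b
        ≤ (ftrlObjective g p q (s + 1) y).toReal - (ftrlObjective g p q s x).toReal := by
  have hq_bot' : ∀ t ∈ Icc 0 s, ∀ u, q t u ≠ ⊥ := fun t ht =>
    hq_bot t (Icc_subset_Icc_right s.le_succ ht)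
  have hΦ_bot := ftrlObjective_ne_bot (g := g)
    (fun t ht => hp_bot t (Icc_subset_Icc_right s.le_succ ht)) hq_bot'
  have hp1_bot := hp_bot (s + 1) (right_mem_Icc.2 (Nat.le_add_left 1 s))
  have hq1_bot := hq_bot (s + 1) (right_mem_Icc.2 (Nat.zero_le _))
  rw [ftrlObjective_succ] at hΦy ⊢
  rw [EReal.add_ne_top_iff_ne_top₂ (by simp [hΦ_bot, hp1_bot]) (hq1_bot y),
    EReal.add_ne_top_iff_ne_top₂ (by simp [hΦ_bot]) (hp1_bot y),
    EReal.add_ne_top_iff_ne_top₂ (hΦ_bot y) (EReal.coe_ne_bot _)] at hΦy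
  obtain ⟨⟨⟨hΦy, -⟩, hpy⟩, hqy⟩ := hΦy
  lift ftrlObjective g p q s x to ℝ using ⟨hΦx, hΦ_bot x⟩ with A hA
  lift ftrlObjective g p q s y to ℝ using ⟨hΦy, hΦ_bot y⟩ with A' hA'
  lift p (s + 1) x to ℝ using ⟨hpx, hp1_bot x⟩ with P hP
  lift p (s + 1) y to ℝ using ⟨hpy, hp1_bot y⟩ with P' hP'
  lift q (s + 1) y to ℝ using ⟨hqy, hq1_bot y⟩ with Q' hQ'
  obtain ⟨b, hb, hb_le⟩ := exists_breg_eq_le_of_isMinOn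
    (convexE_ftrlRegularizer hp_convex (by simpa using hq_convex) hp_bot (by simpa using hq_bot'))
    (ftrlRegularizer_ne_bot hp_bot (by simpa using hq_bot')) (ftrlObjective_add_eq s)
    hX hx hy (hΦ_min.add hp_min) (by rw [← hA, ← hP, EReal.coe_add])
    (by rw [← hA', ← hP', EReal.coe_add])
  refine ⟨b, hb, ?_⟩
  simp only [← EReal.coe_add, EReal.toReal_coe]
  linarith

theorem ftrl_regret_le_of_round_le {T : ℕ} {x : ℕ → EuclideanSpace ℝ (Fin n)}
    {xstar : EuclideanSpace ℝ (Fin n)}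
    (hq_bot : ∀ t ∈ Icc 0 T, ∀ u, q t u ≠ ⊥) (hp_bot : ∀ t ∈ Icc 1 T, ∀ u, p t u ≠ ⊥)
    (hΦ_fin : ∀ t ∈ Icc 0 T, ftrlObjective g p q t (x (t + 1)) ≠ ⊤)
    (hp_fin : ∀ t ∈ Icc 1 T, p t (x t) ≠ ⊤)
    (hΦ_le : ftrlObjective g p q T (x (T + 1)) ≤ ftrlObjective g p q T xstar)
    (hround : ∀ s < T, ∃ b : ℝ, breg (ftrlRegularizer p q (s + 1)) (x (s + 2)) (x (s + 1)) = b ∧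
      ⟪g (s + 1), x (s + 2)⟫_ℝ + (q (s + 1) (x (s + 2))).toReal + (p (s + 1) (x (s + 1))).toReal
          + b
        ≤ (ftrlObjective g p q (s + 1) (x (s + 2))).toReal
          - (ftrlObjective g p q s (x (s + 1))).toReal) :
    ((∑ t ∈ Icc 1 T, ⟪g t, x (t + 1) - xstar⟫_ℝ : ℝ) : EReal)
      ≤ ∑ t ∈ Icc 0 T, (q t xstar - q t (x (t + 1))) + ∑ t ∈ Icc 1 T, (p t xstar - p t (x t))
        - ∑ t ∈ Icc 1 T, breg (ftrlRegularizer p q t) (x (t + 1)) (x t) := by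
  have hp_bot' {t} (ht : t ≤ T) : ∀ s ∈ Icc 1 t, ∀ u, p s u ≠ ⊥ := fun s hs =>
    hp_bot s (Icc_subset_Icc_right ht hs)
  have hq_bot' {t} (ht : t ≤ T) : ∀ s ∈ Icc 0 t, ∀ u, q s u ≠ ⊥ := fun s hs =>
    hq_bot s (Icc_subset_Icc_right ht hs)
  have hq_eq : ∀ t ∈ Icc 0 T, q t (x (t + 1)) = ((q t (x (t + 1))).toReal : EReal) :=
    fun t ht => (EReal.coe_toReal (ne_top_of_ftrlObjective_ne_top (hp_bot' (mem_Icc.1 ht).2)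
      (hq_bot' (mem_Icc.1 ht).2) (hΦ_fin t ht)) (hq_bot t ht _)).symm
  have hp_eq : ∀ t ∈ Icc 1 T, p t (x t) = ((p t (x t)).toReal : EReal) :=
    fun t ht => (EReal.coe_toReal (hp_fin t ht) (hp_bot t ht _)).symm
  have hbreg_eq : ∀ t ∈ Icc 1 T, breg (ftrlRegularizer p q t) (x (t + 1)) (x t)
      = ((breg (ftrlRegularizer p q t) (x (t + 1)) (x t)).toReal : EReal) := by
    intro t ht
    obtain ⟨s, rfl⟩ : ∃ s, t = s + 1 := ⟨t - 1, by grind⟩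
    obtain ⟨b, hb, -⟩ := hround s (by grind)
    rw [hb, EReal.toReal_coe]
  have htelescope := sum_Icc_le_sub_of_forall_le_sub
    (a := fun t => ⟪g t, x (t + 1)⟫_ℝ + (q t (x (t + 1))).toReal + (p t (x t)).toReal
      + (breg (ftrlRegularizer p q t) (x (t + 1)) (x t)).toReal)
    (φ := fun t => (ftrlObjective g p q t (x (t + 1))).toReal) fun s hs => by
      obtain ⟨b, hb, hle⟩ := hround s hs
      simpa [hb] using hle
  have hq_split : ∑ t ∈ Icc 0 T, (q t (x (t + 1))).toReal
      = (q 0 (x 1)).toReal + ∑ t ∈ Icc 1 T, (q t (x (t + 1))).toReal := by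
    rw [← insert_Icc_add_one_left_eq_Icc T.zero_le, sum_insert (by simp), zero_add]
  simp only [ftrlObjective_zero, zero_add, sum_add_distrib] at htelescope
  rw [sum_congr rfl fun t ht => congrArg (q t xstar - ·) (hq_eq t ht),
    sum_congr rfl fun t ht => congrArg (p t xstar - ·) (hp_eq t ht),
    sum_congr rfl hbreg_eq, EReal.sum_sub_coe, EReal.sum_sub_coe, ← EReal.coe_finset_sum]
  refine EReal.coe_le_sub_add_sub_sub ((EReal.coe_toReal (hΦ_fin T (right_mem_Icc.2 T.zero_le))
    (ftrlObjective_ne_bot (hp_bot' le_rfl) (hq_bot' le_rfl) _)).trans_le hΦ_le) ?_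
  simp only [inner_sub_right, sum_sub_distrib, ← sum_inner]
  linarith

end FTRL

theorem stmt12_general {n : ℕ} (T : ℕ) (X : Set (EuclideanSpace ℝ (Fin n)))
    (hXconvex : Convex ℝ X)
    (q p : ℕ → EuclideanSpace ℝ (Fin n) → EReal)
    (g x : ℕ → EuclideanSpace ℝ (Fin n))
    (hq_proper : ∀ t ∈ Finset.Icc 0 T, (∃ u, q t u ≠ ⊤) ∧ ∀ u, q t u ≠ ⊥)
    (hp_proper : ∀ t ∈ Finset.Icc 1 T, (∃ u, p t u ≠ ⊤) ∧ ∀ u, p t u ≠ ⊥)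
    (hq_convex : ∀ t ∈ Finset.Icc 0 T, ConvexE (q t))
    (hp_convex : ∀ t ∈ Finset.Icc 1 T, ConvexE (p t))
    (hp_min : ∀ t ∈ Finset.Icc 1 T, p t (x t) ≠ ⊤ ∧ ∀ u ∈ X, p t (x t) ≤ p t u)
    (Φ : ℕ → EuclideanSpace ℝ (Fin n) → EReal)
    (hΦ : ∀ t u, Φ t u
      = ((inner ℝ (∑ s ∈ Finset.Icc 1 t, g s) u : ℝ) : EReal)
        + ∑ s ∈ Finset.Icc 1 t, p s u + ∑ s ∈ Finset.Icc 0 t, q s u)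
    (hargmin : ∀ t ∈ Finset.Icc 0 T, x (t + 1) ∈ X ∧ Φ t (x (t + 1)) ≠ ⊤ ∧
        Φ t (x (t + 1)) ≠ ⊥ ∧ ∀ u ∈ X, Φ t (x (t + 1)) ≤ Φ t u)
    (xstar : EuclideanSpace ℝ (Fin n)) (hstar : xstar ∈ X) :
    ((∑ t ∈ Finset.Icc 1 T, (inner ℝ (g t) (x (t + 1) - xstar) : ℝ) : ℝ) : EReal)
      ≤ ∑ t ∈ Finset.Icc 0 T, (q t xstar - q t (x (t + 1)))
        + ∑ t ∈ Finset.Icc 1 T, (p t xstar - p t (x t))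
        - ∑ t ∈ Finset.Icc 1 T,
            breg (fun u => ∑ s ∈ Finset.Icc 1 t, p s u + ∑ s ∈ Finset.Icc 0 (t - 1), q s u)
              (x (t + 1)) (x t) := by
  obtain rfl : Φ = ftrlObjective g p q := funext₂ hΦ
  have hq_bot : ∀ t ∈ Icc 0 T, ∀ u, q t u ≠ ⊥ := fun t ht => (hq_proper t ht).2
  have hp_bot : ∀ t ∈ Icc 1 T, ∀ u, p t u ≠ ⊥ := fun t ht => (hp_proper t ht).2
  refine ftrl_regret_le_of_round_le hq_bot hp_bot (fun t ht => (hargmin t ht).2.1)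
    (fun t ht => (hp_min t ht).1) ((hargmin T (right_mem_Icc.2 T.zero_le)).2.2.2 xstar hstar)
    fun s hs => ?_
  have hs₀ : s ∈ Icc 0 T := mem_Icc.2 ⟨s.zero_le, hs.le⟩
  have hs₁ : s + 1 ∈ Icc 0 T := mem_Icc.2 ⟨(s + 1).zero_le, hs⟩
  have hs₁' : s + 1 ∈ Icc 1 T := mem_Icc.2 ⟨Nat.le_add_left 1 s, hs⟩
  exact exists_breg_eq_and_round_le s hXconvex (hargmin s hs₀).1 (hargmin (s + 1) hs₁).1
    (fun t ht => hp_bot t (Icc_subset_Icc_right hs ht))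
    (fun t ht => hq_bot t (Icc_subset_Icc_right hs ht))
    (fun t ht => hp_convex t (Icc_subset_Icc_right hs ht))
    (fun t ht => hq_convex t (Icc_subset_Icc_right hs.le ht))
    (isMinOn_iff.2 (hargmin s hs₀).2.2.2) (hargmin s hs₀).2.1
    (isMinOn_iff.2 (hp_min (s + 1) hs₁').2) (hp_min (s + 1) hs₁').1 (hargmin (s + 1) hs₁).2.1

/-- Forward (linear) regret bound for adaptive FTRL, finite-dimensional convex case:
`∑_{t=1}^T ⟨gₜ, x_{t+1} - x*⟩ ≤ ∑_{t=0}^T (qₜ(x*) - qₜ(x_{t+1})) + ∑_{t=1}^T (pₜ(x*) - pₜ(xₜ))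
 - ∑_{t=1}^T B_{r_{1:t}}(x_{t+1}, xₜ)`, where `r_{1:t} = p_{1:t} + q_{0:t-1}` and
`x_{t+1} ∈ argmin_{x ∈ X} ⟨g_{1:t}, x⟩ + p_{1:t}(x) + q_{0:t}(x)`. -/
theorem stmt12 {n : ℕ} (T : ℕ) (X : Set (EuclideanSpace ℝ (Fin n)))
    (hXclosed : IsClosed X) (hXconvex : Convex ℝ X)
    (q p : ℕ → EuclideanSpace ℝ (Fin n) → EReal)
    (g x : ℕ → EuclideanSpace ℝ (Fin n))
    (hq_proper : ∀ t ∈ Finset.Icc 0 T, (∃ u, q t u ≠ ⊤) ∧ ∀ u, q t u ≠ ⊥)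
    (hp_proper : ∀ t ∈ Finset.Icc 1 T, (∃ u, p t u ≠ ⊤) ∧ ∀ u, p t u ≠ ⊥)
    (hq_closed : ∀ t ∈ Finset.Icc 0 T, LowerSemicontinuous (q t))
    (hp_closed : ∀ t ∈ Finset.Icc 1 T, LowerSemicontinuous (p t))
    (hq_convex : ∀ t ∈ Finset.Icc 0 T, ConvexE (q t))
    (hp_convex : ∀ t ∈ Finset.Icc 1 T, ConvexE (p t))
    (hp_min : ∀ t ∈ Finset.Icc 1 T, p t (x t) ≠ ⊤ ∧ ∀ u ∈ X, p t (x t) ≤ p t u)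
    (Φ : ℕ → EuclideanSpace ℝ (Fin n) → EReal)
    (hΦ : ∀ t u, Φ t u
      = ((inner ℝ (∑ s ∈ Finset.Icc 1 t, g s) u : ℝ) : EReal)
        + ∑ s ∈ Finset.Icc 1 t, p s u + ∑ s ∈ Finset.Icc 0 t, q s u)
    (hargmin : ∀ t ∈ Finset.Icc 0 T, x (t + 1) ∈ X ∧ Φ t (x (t + 1)) ≠ ⊤ ∧
        Φ t (x (t + 1)) ≠ ⊥ ∧ ∀ u ∈ X, Φ t (x (t + 1)) ≤ Φ t u)
    (xstar : EuclideanSpace ℝ (Fin n)) (hstar : xstar ∈ X) :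
    ((∑ t ∈ Finset.Icc 1 T, (inner ℝ (g t) (x (t + 1) - xstar) : ℝ) : ℝ) : EReal)
      ≤ ∑ t ∈ Finset.Icc 0 T, (q t xstar - q t (x (t + 1)))
        + ∑ t ∈ Finset.Icc 1 T, (p t xstar - p t (x t))
        - ∑ t ∈ Finset.Icc 1 T,
            breg (fun u => ∑ s ∈ Finset.Icc 1 t, p s u + ∑ s ∈ Finset.Icc 0 (t - 1), q s u)
              (x (t + 1)) (x t) :=
  stmt12_general T X hXconvex q p g x hq_proper hp_proper hq_convex hp_convex hp_min Φ hΦ hargmin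
    xstar hstar

end
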